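/- arXiv:2505.03471 — 3 statements merged into one kernel-verified Lean document; each statement's English description precedes it below -/
import Mathlib

section
/- If the nodes are equally spaced, ε_p = ε₀ + p·d with d > 0, ε₀ > 0, and d₀ = ε₀/d, then the Lagrange weights a_p = ∏_{q≠p} ε_q/(ε_q - ε_p) admit the closed form a_p = ((-1)^p / (p!·(ρ-1-p)!·(d₀+p))) · Γ(d₀+ρ)/Γ(d₀) for p = 0,1,…,ρ-1. -/
/-!
Dividing numerator and denominator by `d`, each factor `ε_q / (ε_q - ε_p)` becomes
`(d₀ + q) / (q - p)`. Over all `q ≠ p` the numerators multiply to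
`Γ(d₀ + ρ) / (Γ(d₀) (d₀ + p))` by the functional equation of `Γ`, and the integer
denominators to `(-1)^p p! (ρ - 1 - p)!`.
-/

open Finset Nat

theorem Real.Gamma_add_nat_eq_prod_mul_Gamma {x : ℝ} (hx : ∀ k : ℕ, x + k ≠ 0) (n : ℕ) :
    Real.Gamma (x + n) = (∏ k ∈ range n, (x + k)) * Real.Gamma x := by
  induction n with
  | zero => simp
  | succ n ih =>
    rw [Nat.cast_succ, ← add_assoc, Real.Gamma_add_one (hx n), ih, prod_range_succ]
    ring

theorem Fin.prod_univ_erase_eq_prod_range_erase {M : Type*} [CommMonoid M] {n : ℕ}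
    (f : ℕ → M) (p : Fin n) :
    ∏ q ∈ univ.erase p, f q = ∏ q ∈ (range n).erase (p : ℕ), f q := by
  rw [← Nat.Iio_eq_range, ← Fin.map_valEmbedding_univ, show (p : ℕ) = Fin.valEmbedding p from rfl,
    ← map_erase, prod_map]
  rfl

theorem prod_range_natCast_sub_self {R : Type*} [CommRing R] (p : ℕ) :
    ∏ q ∈ range p, ((q : R) - p) = (-1) ^ p * p ! := by
  have hreflect : ∀ q ∈ range p, (((p - 1 - q : ℕ) : R) - p) = -1 * ((q + 1 : ℕ) : R) := by
    intro q hq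
    have hqp := mem_range.1 hq
    rw [Nat.cast_sub (by omega), Nat.cast_sub (by omega)]
    push_cast; ring
  rw [← prod_range_reflect, prod_congr rfl hreflect, prod_mul_distrib, prod_const, card_range,
    ← Nat.cast_prod, prod_range_add_one_eq_factorial]

theorem prod_Ico_natCast_sub_self {R : Type*} [CommRing R] (p n : ℕ) :
    ∏ q ∈ Ico (p + 1) n, ((q : R) - p) = (n - 1 - p) ! := by
  rw [prod_Ico_eq_prod_range, show n - (p + 1) = n - 1 - p by omega,
    ← prod_range_add_one_eq_factorial, Nat.cast_prod]
  refine prod_congr rfl fun q _ => ?_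
  push_cast; ring

theorem prod_range_erase_natCast_sub_self {R : Type*} [CommRing R] {p n : ℕ} (hp : p < n) :
    ∏ q ∈ (range n).erase p, ((q : R) - p) = (-1) ^ p * p ! * (n - 1 - p) ! := by
  have hsplit : (range n).erase p = range p ∪ Ico (p + 1) n := by
    ext q; simp only [mem_erase, mem_range, mem_union, mem_Ico]; omega
  rw [hsplit, prod_union, prod_range_natCast_sub_self, prod_Ico_natCast_sub_self]
  exact disjoint_left.2 fun q hq hq' => by simp only [mem_range, mem_Ico] at hq hq'; omega

theorem lagrange_weights_equally_spaced_general (ρ : ℕ)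
    (ε : Fin ρ → ℝ) (ε₀ d d₀ : ℝ) (hd : 0 < d) (hε₀ : 0 < ε₀)
    (hεp : ∀ p : Fin ρ, ε p = ε₀ + (p : ℕ) * d) (hd₀ : d₀ = ε₀ / d) :
    ∀ p : Fin ρ,
      (∏ q ∈ Finset.univ.erase p, ε q / (ε q - ε p)) =
        (-1) ^ (p : ℕ) /
            ((Nat.factorial (p : ℕ) : ℝ) * (Nat.factorial (ρ - 1 - (p : ℕ)) : ℝ) *
              (d₀ + (p : ℕ))) *
          (Real.Gamma (d₀ + ρ) / Real.Gamma d₀) := by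
  intro p
  have hd₀_pos : 0 < d₀ := hd₀ ▸ div_pos hε₀ hd
  have hratio (q : Fin ρ) :
      ε q / (ε q - ε p) = (d₀ + (q : ℕ)) / (((q : ℕ) : ℝ) - (p : ℕ)) := by
    rw [hεp, hεp, hd₀, div_add' _ _ _ hd.ne', div_div]
    congr 1; ring
  have hnumerator : (∏ q ∈ (range ρ).erase p, (d₀ + q)) * (d₀ + p) =
      Real.Gamma (d₀ + ρ) / Real.Gamma d₀ := by
    rw [prod_erase_mul _ _ (mem_range.2 p.isLt),
      Real.Gamma_add_nat_eq_prod_mul_Gamma (fun k => by positivity),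
      mul_div_cancel_right₀ _ (Real.Gamma_pos_of_pos hd₀_pos).ne']
  simp_rw [hratio]
  rw [Fin.prod_univ_erase_eq_prod_range_erase (fun q => (d₀ + q) / ((q : ℝ) - p)),
    prod_div_distrib, prod_range_erase_natCast_sub_self p.isLt, ← hnumerator]
  field_simp
  simp [← pow_mul]

/-- For equally spaced nodes `ε_p = ε₀ + p d` (`d > 0`, `ε₀ > 0`), with
`d₀ = ε₀ / d`, the Lagrange weights `a_p = ∏_{q≠p} ε_q/(ε_q - ε_p)` have the
closed form `a_p = ((-1)^p / (p! (ρ-1-p)! (d₀+p))) Γ(d₀+ρ)/Γ(d₀)`. -/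
theorem lagrange_weights_equally_spaced (ρ : ℕ) (hρ : 0 < ρ)
    (ε : Fin ρ → ℝ) (ε₀ d d₀ : ℝ) (hd : 0 < d) (hε₀ : 0 < ε₀)
    (hεp : ∀ p : Fin ρ, ε p = ε₀ + (p : ℕ) * d) (hd₀ : d₀ = ε₀ / d) :
    ∀ p : Fin ρ,
      (∏ q ∈ Finset.univ.erase p, ε q / (ε q - ε p)) =
        (-1) ^ (p : ℕ) /
            ((Nat.factorial (p : ℕ) : ℝ) * (Nat.factorial (ρ - 1 - (p : ℕ)) : ℝ) *
              (d₀ + (p : ℕ))) *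
          (Real.Gamma (d₀ + ρ) / Real.Gamma d₀) :=
  lagrange_weights_equally_spaced_general ρ ε ε₀ d d₀ hd hε₀ hεp hd₀
end

section
/- Let f : ℝ → ℂ be such that both f and its Fourier transform f̂ lie in the Wiener space W(ℝ). Then for α > 0 the Zak transforms satisfy Z_α f(x, y) = (e^{2πi x y}/α) · Z_{1/α} f̂(y, -x) for all x, y ∈ ℝ, where Z_α f(x,y) = ∑_{k∈ℤ} f(x - αk) e^{2πi α k y}. -/
/-!
With `F t = f (α t) e^{-2πi α t y}` one has `F̂ w = α⁻¹ f̂ (w / α + y)`, and the Poisson summation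
formula for `F` at `x / α`, reindexed by `k ↦ -k`, is the claimed identity. Poisson summation
applies to `F` because the Wiener condition `∑ₙ sup_{[n, n+1]} ‖f‖ < ∞` is stable under affine
changes of variable and bounds the sup norms of the translates `F (· + n)` on any compact set.
-/

open Real MeasureTheory
open scoped FourierTransform

lemma summable_comp_floor_mul_add {a : ℤ → ℝ} (ha : Summable a) {β : ℝ} (hβ : 0 < β) (c : ℝ) :
    Summable fun n : ℤ => a ⌊β * n + c⌋ := by
  set K : ℕ := ⌈β⁻¹⌉₊ + 1
  -- As `β K > 1`, integers with the same floor `⌊β n + c⌋` are less than `K` apart,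
  -- so their residues mod `K` tell them apart.
  have hinj : Function.Injective fun n : ℤ => (⌊β * n + c⌋, (n : ZMod K)) := by
    intro m n hmn
    simp only [Prod.mk.injEq, ZMod.intCast_eq_intCast_iff_dvd_sub] at hmn
    obtain ⟨hfloor, hdvd⟩ := hmn
    have hclose : |β * m + c - (β * n + c)| < 1 := Int.abs_sub_lt_one_of_floor_eq_floor hfloor
    have hlt : |((n - m : ℤ) : ℝ)| < K := by
      rw [show β * m + c - (β * n + c) = -(β * ((n - m : ℤ) : ℝ)) by push_cast; ring, abs_neg,
        abs_mul, abs_of_pos hβ] at hclose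
      calc |((n - m : ℤ) : ℝ)| < β⁻¹ := by rwa [← one_div, lt_div_iff₀' hβ]
        _ ≤ ⌈β⁻¹⌉₊ := Nat.le_ceil _
        _ < K := by simp [K]
    have := Int.eq_zero_of_abs_lt_dvd hdvd (by exact_mod_cast hlt)
    omega
  have hprod : Summable fun p : ℤ × ZMod K => a p.1 * 1 :=
    summable_mul_of_summable_norm (g := fun _ : ZMod K => (1 : ℝ)) ha.norm .of_finite
  simpa [Function.comp_def] using hprod.comp_injective hinj

section WienerAmalgam

variable {E : Type*} [NormedAddCommGroup E]

/-- `∑ n, unitSup f n` is the norm of `f` in the Wiener amalgam space `W(ℝ)`. -/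
noncomputable def unitSup (f : ℝ → E) (n : ℤ) : ℝ :=
  ⨆ x : Set.Icc (0 : ℝ) 1, ‖f (x + n)‖

lemma unitSup_nonneg (f : ℝ → E) (n : ℤ) : 0 ≤ unitSup f n :=
  Real.iSup_nonneg fun _ => norm_nonneg _

lemma unitSup_congr_norm {F : Type*} [NormedAddCommGroup F] {f : ℝ → E} {g : ℝ → F}
    (h : ∀ t, ‖f t‖ = ‖g t‖) : unitSup f = unitSup g := by
  funext n
  simp only [unitSup, h]

lemma unitSup_smul {𝕜 : Type*} [NormedField 𝕜] [NormedSpace 𝕜 E] (c : 𝕜) (f : ℝ → E) :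
    unitSup (c • f) = ‖c‖ • unitSup f := by
  funext n
  simp only [unitSup, Pi.smul_apply, norm_smul, smul_eq_mul,
    Real.mul_iSup_of_nonneg (norm_nonneg c)]

lemma norm_le_unitSup_floor {f : ℝ → E} (hf : Continuous f) (u : ℝ) :
    ‖f u‖ ≤ unitSup f ⌊u⌋ := by
  have hbdd : BddAbove (Set.range fun x : Set.Icc (0 : ℝ) 1 => ‖f (x + ⌊u⌋)‖) :=
    (isCompact_range (by fun_prop)).bddAbove
  simpa only [unitSup, Int.fract_add_floor] using
    le_ciSup hbdd ⟨Int.fract u, Int.fract_nonneg u, (Int.fract_lt_one u).le⟩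

lemma norm_le_sum_unitSup {f : ℝ → E} (hf : Continuous f) {u : ℝ} {m : ℤ} {s : Finset ℤ}
    (hu : ⌊u⌋ - m ∈ s) : ‖f u‖ ≤ ∑ j ∈ s, unitSup f (m + j) :=
  (norm_le_unitSup_floor hf u).trans <| by
    simpa using Finset.single_le_sum (fun j _ => unitSup_nonneg f (m + j)) hu

lemma summable_norm_intCast {f : ℝ → E} (hf : Continuous f) (hW : Summable (unitSup f)) :
    Summable fun n : ℤ => ‖f n‖ :=
  hW.of_nonneg_of_le (fun _ => norm_nonneg _) fun n => by
    simpa using norm_le_unitSup_floor hf n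

lemma summable_unitSup_comp_mul_add {f : ℝ → E} (hf : Continuous f) (hW : Summable (unitSup f))
    {β : ℝ} (hβ : 0 < β) (c : ℝ) : Summable (unitSup fun t => f (β * t + c)) := by
  set M : ℤ := ⌈β⌉
  have hsum : Summable fun n : ℤ => ∑ j ∈ Finset.Icc 0 M, unitSup f (⌊β * n + c⌋ + j) :=
    summable_sum fun j _ => summable_comp_floor_mul_add (a := fun m => unitSup f (m + j))
      (hW.comp_injective (add_left_injective j)) hβ c
  refine hsum.of_nonneg_of_le (unitSup_nonneg _) fun n => Real.iSup_le (fun x => ?_)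
    (Finset.sum_nonneg fun j _ => unitSup_nonneg f _)
  refine norm_le_sum_unitSup hf (Finset.mem_Icc.mpr ?_)
  obtain ⟨hx0, hx1⟩ := x.2
  have hshift : β * (x + n) + c = β * n + c + β * x := by ring
  have hlow : ⌊β * n + c⌋ ≤ ⌊β * (x + n) + c⌋ := Int.floor_le_floor (by nlinarith)
  have hhigh : ⌊β * (x + n) + c⌋ ≤ ⌊β * n + c⌋ + M := by
    rw [← Int.floor_add_intCast, hshift]
    exact Int.floor_le_floor (by nlinarith [Int.le_ceil β])
  omega

lemma summable_norm_restrict_comp_addRight (f : C(ℝ, E)) (hW : Summable (unitSup f))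
    (K : TopologicalSpace.Compacts ℝ) :
    Summable fun n : ℤ => ‖(f.comp (ContinuousMap.addRight (n : ℝ))).restrict K‖ := by
  obtain ⟨R, hR⟩ := K.isCompact.isBounded.subset_closedBall 0
  set M : ℤ := ⌈R⌉
  have hsum : Summable fun n : ℤ => ∑ j ∈ Finset.Icc (-M) M, unitSup f (n + j) :=
    summable_sum fun j _ => hW.comp_injective (add_left_injective j)
  refine hsum.of_nonneg_of_le (fun _ => norm_nonneg _) fun n =>
    (ContinuousMap.norm_le _ (Finset.sum_nonneg fun j _ => unitSup_nonneg f _)).mpr fun z => ?_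
  refine norm_le_sum_unitSup f.continuous (Finset.mem_Icc.mpr ?_)
  have hz : |(z : ℝ)| ≤ R := by simpa using hR z.2
  have hlow : -M ≤ ⌊(z : ℝ)⌋ :=
    Int.le_floor.mpr (by push_cast; linarith [abs_le.mp hz, Int.le_ceil R])
  have hhigh : ⌊(z : ℝ)⌋ ≤ M := (Int.floor_le_floor (abs_le.mp hz).2).trans (Int.floor_le_ceil R)
  simp only [ContinuousMap.coe_addRight, Int.floor_add_intCast]
  omega

end WienerAmalgam

section Fourier

variable {E : Type*} [NormedAddCommGroup E] [NormedSpace ℂ E]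

lemma fourier_comp_mul_left (f : ℝ → E) {a : ℝ} (ha : a ≠ 0) (w : ℝ) :
    𝓕 (fun t => f (a * t)) w = |a⁻¹| • 𝓕 f (a⁻¹ * w) := by
  rw [fourier_real_eq, fourier_real_eq,
    ← Measure.integral_comp_mul_left (fun v => 𝐞 (-(v * (a⁻¹ * w))) • f v) a]
  congr 1
  funext t
  field_simp

lemma fourier_fourierChar_smul (f : ℝ → E) (y w : ℝ) :
    𝓕 (fun t => 𝐞 (-(t * y)) • f t) w = 𝓕 f (w + y) := by
  simp_rw [fourier_real_eq, smul_smul, ← AddChar.map_add_eq_mul]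
  congr 1
  funext t
  ring_nf

lemma fourier_eq_integral_mul_exp (f : ℝ → ℂ) (w : ℝ) :
    𝓕 f w = ∫ x : ℝ, f x * Complex.exp (-(2 * π * Complex.I) * w * x) := by
  rw [fourier_real_eq_integral_exp_smul]
  congr 1
  funext v
  rw [smul_eq_mul, mul_comm]
  congr 2
  push_cast
  ring

end Fourier

theorem tsum_eq_tsum_fourier_of_summable_unitSup (f : C(ℝ, ℂ)) (hf : Summable (unitSup f))
    (hFc : Continuous (𝓕 ⇑f)) (hF : Summable (unitSup (𝓕 ⇑f))) (x : ℝ) :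
    ∑' n : ℤ, f (x + n) = ∑' n : ℤ, 𝓕 (⇑f) n * fourier n (x : UnitAddCircle) :=
  Real.tsum_eq_tsum_fourier (summable_norm_restrict_comp_addRight f hf)
    (summable_norm_intCast hFc hF).of_norm x

theorem tsum_fourierChar_smul_eq_tsum_fourier (f : ℝ → ℂ) (hf : Continuous f)
    (hWf : Summable (unitSup f)) (hfc : Continuous (𝓕 f)) (hWF : Summable (unitSup (𝓕 f)))
    {α : ℝ} (hα : 0 < α) (x y : ℝ) :
    ∑' n : ℤ, 𝐞 (-((x + α * n) * y)) • f (x + α * n) =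
      α⁻¹ • ∑' n : ℤ, 𝓕 f (α⁻¹ * n + y) * fourier n ((x / α : ℝ) : UnitAddCircle) := by
  set h : ℝ → ℂ := fun u => 𝐞 (-(u * y)) • f u
  let F : C(ℝ, ℂ) := ⟨fun t => h (α * t), by fun_prop⟩
  have hFF : 𝓕 ⇑F = |α⁻¹| • fun w => 𝓕 f (α⁻¹ * w + y) := funext fun w => by
    simp only [F, ContinuousMap.coe_mk, fourier_comp_mul_left h hα.ne', h,
      fourier_fourierChar_smul, Pi.smul_apply]
  have hWF' : Summable (unitSup F) := by
    rw [unitSup_congr_norm (g := fun t => f (α * t + 0)) fun t => by simp [F, h]]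
    exact summable_unitSup_comp_mul_add hf hWf hα 0
  have hP := tsum_eq_tsum_fourier_of_summable_unitSup F hWF' (by rw [hFF]; fun_prop)
    (by rw [hFF, unitSup_smul]
        exact (summable_unitSup_comp_mul_add hfc hWF (inv_pos.2 hα) y).const_smul ‖|α⁻¹|‖) (x / α)
  simp only [hFF, Pi.smul_apply, smul_mul_assoc] at hP
  rw [tsum_const_smul'', abs_of_pos (inv_pos.2 hα)] at hP
  rw [← hP]
  congr 1
  funext n
  simp only [F, h, ContinuousMap.coe_mk]
  rw [mul_add, mul_div_cancel₀ x hα.ne']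

theorem zak_transform_fourier_relation_general (f g : ℝ → ℂ)
    (hf : Continuous f) (hg : Continuous g)
    (hgdef : ∀ w : ℝ, g w = ∫ x : ℝ, f x * Complex.exp (-(2 * π * Complex.I) * w * x))
    (hWf : Summable fun n : ℤ => ⨆ x : Set.Icc (0 : ℝ) 1, ‖f ((x : ℝ) + n)‖)
    (hWg : Summable fun n : ℤ => ⨆ x : Set.Icc (0 : ℝ) 1, ‖g ((x : ℝ) + n)‖)
    (α : ℝ) (hα : 0 < α) :
    ∀ x y : ℝ,
      ∑' k : ℤ, f (x - α * k) * Complex.exp (2 * π * Complex.I * α * k * y) =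
        Complex.exp (2 * π * Complex.I * x * y) / α *
          ∑' k : ℤ, g (y - k / α) * Complex.exp (2 * π * Complex.I * (1 / α) * k * (-x)) := by
  intro x y
  obtain rfl : g = 𝓕 f := funext fun w => (hgdef w).trans (fourier_eq_integral_mul_exp f w).symm
  have hLHS : ∑' k : ℤ, f (x - α * k) * Complex.exp (2 * π * Complex.I * α * k * y) =
      Complex.exp (2 * π * Complex.I * x * y) *
        ∑' n : ℤ, 𝐞 (-((x + α * n) * y)) • f (x + α * n) := by
    rw [← tsum_mul_left, ← (Equiv.neg ℤ).tsum_eq]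
    refine tsum_congr fun n => ?_
    rw [Circle.smul_def, fourierChar_apply, smul_eq_mul, ← mul_assoc, ← Complex.exp_add,
      Equiv.neg_apply, Int.cast_neg, mul_neg, sub_neg_eq_add, mul_comm]
    congr 2
    push_cast
    ring
  have hRHS : ∑' k : ℤ, 𝓕 f (y - k / α) * Complex.exp (2 * π * Complex.I * (1 / α) * k * (-x)) =
      ∑' n : ℤ, 𝓕 f (α⁻¹ * n + y) * fourier n ((x / α : ℝ) : UnitAddCircle) := by
    rw [← (Equiv.neg ℤ).tsum_eq]
    refine tsum_congr fun n => ?_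
    rw [fourier_coe_apply, Equiv.neg_apply, Int.cast_neg, neg_div, sub_neg_eq_add, add_comm,
      div_eq_inv_mul]
    congr 2
    push_cast
    ring
  rw [hLHS, hRHS, tsum_fourierChar_smul_eq_tsum_fourier f hf hWf hg hWg hα x y, Complex.real_smul]
  push_cast
  ring

/-- If `f` and its Fourier transform `g = f̂` both lie in the Wiener space `W(ℝ)`,
then for `α > 0` the Zak transforms satisfy
`Z_α f(x, y) = (e^{2πixy}/α) · Z_{1/α} f̂(y, -x)` for all `x, y ∈ ℝ`. -/
theorem zak_transform_fourier_relation (f g : ℝ → ℂ)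
    (hf : Continuous f) (hg : Continuous g)
    (hfi : Integrable f)
    (hgdef : ∀ w : ℝ, g w = ∫ x : ℝ, f x * Complex.exp (-(2 * π * Complex.I) * w * x))
    (hWf : Summable fun n : ℤ => ⨆ x : Set.Icc (0 : ℝ) 1, ‖f ((x : ℝ) + n)‖)
    (hWg : Summable fun n : ℤ => ⨆ x : Set.Icc (0 : ℝ) 1, ‖g ((x : ℝ) + n)‖)
    (α : ℝ) (hα : 0 < α) :
    ∀ x y : ℝ,
      ∑' k : ℤ, f (x - α * k) * Complex.exp (2 * π * Complex.I * α * k * y) =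
        Complex.exp (2 * π * Complex.I * x * y) / α *
          ∑' k : ℤ, g (y - k / α) * Complex.exp (2 * π * Complex.I * (1 / α) * k * (-x)) :=
  zak_transform_fourier_relation_general f g hf hg hgdef hWf hWg α hα
end

section
/- Let F_{li} : ℝ → ℂ be smooth functions (l ∈ ℤ, 0 ≤ i ≤ r-1) satisfying ∑_{i=0}^{r-1} C(j,i)·i!·(2πi)^{-(j-i)}·F_{li}^{(j-i)}(l/ρ) = ρ δ_{l0} δ_{j0} for all 0 ≤ j ≤ κ-1 and l ∈ ℤ. Let P be a smooth function satisfying P^{(j)}(0) = (2πi)^j δ_{j0} for 0 ≤ j ≤ κ-1, and set F̃_{li} = P·F_{li}. Then ∑_{i=0}^{r-1} C(j,i)·i!·(2πi)^{-(j-i)}·F̃_{li}^{(j-i)}(l/ρ) = ρ δ_{l0} δ_{j0} for all 0 ≤ j ≤ κ-1 and l ∈ ℤ. -/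
open Finset Real

private lemma choose_swap {j i m : ℕ} (h : i + m ≤ j) :
    j.choose i * (j - i).choose m = j.choose m * (j - m).choose i := by
  have h1 := Nat.choose_mul (n := j) (k := i + m) (s := i) (Nat.le_add_right _ _)
  have h2 := Nat.choose_mul (n := j) (k := i + m) (s := m) (Nat.le_add_left _ _)
  rw [Nat.add_sub_cancel_left] at h1
  rw [Nat.add_sub_cancel] at h2
  have h3 : (i + m).choose i = (i + m).choose m := by
    rw [← Nat.choose_symm (Nat.le_add_right i m), Nat.add_sub_cancel_left]
  rw [← h1, ← h2, h3]

private lemma leibniz_iteratedDeriv (f g : ℝ → ℂ) (hf : ContDiff ℝ (⊤ : ℕ∞) f)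
    (hg : ContDiff ℝ (⊤ : ℕ∞) g) (n : ℕ) (x : ℝ) :
    iteratedDeriv n (fun y => f y * g y) x
      = ∑ m ∈ Finset.range (n + 1),
          (n.choose m : ℂ) * (iteratedDeriv m f x * iteratedDeriv (n - m) g x) := by
  induction n generalizing x with
  | zero => simp
  | succ n ih =>
    have hfd : ∀ m : ℕ, Differentiable ℝ (iteratedDeriv m f) := fun m =>
      hf.differentiable_iteratedDeriv m (by exact_mod_cast ENat.coe_lt_top m)
    have hgd : ∀ m : ℕ, Differentiable ℝ (iteratedDeriv m g) := fun m =>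
      hg.differentiable_iteratedDeriv m (by exact_mod_cast ENat.coe_lt_top m)
    have hrw : iteratedDeriv n (fun y => f y * g y)
        = fun x => ∑ m ∈ Finset.range (n + 1),
            (n.choose m : ℂ) * (iteratedDeriv m f x * iteratedDeriv (n - m) g x) :=
      funext ih
    rw [iteratedDeriv_succ, hrw]
    have hdterm : ∀ m ∈ Finset.range (n + 1), HasDerivAt
        (fun y => (n.choose m : ℂ) * (iteratedDeriv m f y * iteratedDeriv (n - m) g y))
        ((n.choose m : ℂ) * (iteratedDeriv (m + 1) f x * iteratedDeriv (n - m) g x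
          + iteratedDeriv m f x * iteratedDeriv (n - m + 1) g x)) x := by
      intro m _
      have h1 : HasDerivAt (iteratedDeriv m f) (iteratedDeriv (m + 1) f x) x := by
        rw [iteratedDeriv_succ]; exact (hfd m x).hasDerivAt
      have h2 : HasDerivAt (iteratedDeriv (n - m) g) (iteratedDeriv (n - m + 1) g x) x := by
        rw [iteratedDeriv_succ]; exact (hgd (n - m) x).hasDerivAt
      exact (h1.mul h2).const_mul _
    rw [(HasDerivAt.fun_sum hdterm).deriv]
    rw [Finset.sum_choose_succ_mul (fun a b => iteratedDeriv a f x * iteratedDeriv b g x) n]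
    simp only [mul_add, Finset.sum_add_distrib]
    rw [add_comm]
    congr 1
    · apply Finset.sum_congr rfl
      intro m hm
      have hm' : m ≤ n := by simpa [Nat.lt_succ_iff] using hm
      have : n + 1 - m = n - m + 1 := by omega
      rw [this]

/-- If the functions `F_{li}` satisfy the generalized vanishing-moment conditions
`∑_i C(j,i) i! (2πi)^{-(j-i)} F_{li}^{(j-i)}(l/ρ) = ρ δ_{l0} δ_{j0}` for
`0 ≤ j ≤ κ-1`, and `P` is smooth with `P^{(j)}(0) = (2πi)^j δ_{j0}` for
`0 ≤ j ≤ κ-1`, then the modified functions `F̃_{li} = P · F_{li}` satisfy the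
same conditions. -/
theorem modified_kernels_vanishing_moments (r κ ρ : ℕ) (hr : 0 < r) (hκ : 0 < κ)
    (hρ : 0 < ρ)
    (F : ℤ → Fin r → ℝ → ℂ) (hF : ∀ l i, ContDiff ℝ (⊤ : ℕ∞) (F l i))
    (P : ℝ → ℂ) (hPsmooth : ContDiff ℝ (⊤ : ℕ∞) P)
    (hmom : ∀ j : ℕ, j < κ → ∀ l : ℤ,
      ∑ i : Fin r, (j.choose (i : ℕ) : ℂ) * (Nat.factorial (i : ℕ) : ℂ) *
          ((2 * π * Complex.I) ^ (j - (i : ℕ)))⁻¹ *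
          iteratedDeriv (j - (i : ℕ)) (F l i) ((l : ℝ) / ρ)
        = (ρ : ℂ) * (if l = 0 then 1 else 0) * (if j = 0 then 1 else 0))
    (hP : ∀ j : ℕ, j < κ →
      iteratedDeriv j P 0 = (2 * π * Complex.I) ^ j * (if j = 0 then 1 else 0)) :
    ∀ j : ℕ, j < κ → ∀ l : ℤ,
      ∑ i : Fin r, (j.choose (i : ℕ) : ℂ) * (Nat.factorial (i : ℕ) : ℂ) *
          ((2 * π * Complex.I) ^ (j - (i : ℕ)))⁻¹ *
          iteratedDeriv (j - (i : ℕ)) (fun w => P w * F l i w) ((l : ℝ) / ρ)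
        = (ρ : ℂ) * (if l = 0 then 1 else 0) * (if j = 0 then 1 else 0) := by
  intro j hj l
  set x : ℝ := (l : ℝ) / ρ with hxdef
  have key : ∀ i : Fin r,
      (j.choose (i : ℕ) : ℂ) * (Nat.factorial (i : ℕ) : ℂ) *
          ((2 * π * Complex.I) ^ (j - (i : ℕ)))⁻¹ *
          iteratedDeriv (j - (i : ℕ)) (fun w => P w * F l i w) x
      = ∑ m ∈ Finset.range (j + 1),
          ((j.choose m : ℂ) * ((2 * π * Complex.I) ^ m)⁻¹ * iteratedDeriv m P x) *
          (((j - m).choose (i : ℕ) : ℂ) * (Nat.factorial (i : ℕ) : ℂ) *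
            ((2 * π * Complex.I) ^ (j - m - (i : ℕ)))⁻¹ *
            iteratedDeriv (j - m - (i : ℕ)) (F l i) x) := by
    intro i
    rw [leibniz_iteratedDeriv P (F l i) hPsmooth (hF l i) (j - (i : ℕ)) x, Finset.mul_sum]
    rw [Finset.sum_subset (Finset.range_subset_range.2 (by omega : j - (i : ℕ) + 1 ≤ j + 1))
      (by
        intro m _ hm
        have : j - (i : ℕ) < m := by
          simp only [Finset.mem_range, not_lt] at hm; omega
        simp [Nat.choose_eq_zero_of_lt this])]
    apply Finset.sum_congr rfl
    intro m hm
    have hmj : m ≤ j := by simpa [Nat.lt_succ_iff] using hm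
    have hsub : j - (i : ℕ) - m = j - m - (i : ℕ) := by omega
    rw [hsub]
    by_cases hle : (i : ℕ) + m ≤ j
    · have hpow : ((2 * (π:ℂ) * Complex.I) ^ (j - (i : ℕ)))⁻¹
          = ((2 * (π:ℂ) * Complex.I) ^ m)⁻¹ * ((2 * (π:ℂ) * Complex.I) ^ (j - m - (i : ℕ)))⁻¹ := by
        rw [show j - (i : ℕ) = m + (j - m - (i : ℕ)) by omega, pow_add, mul_inv]
      have hc : (j.choose (i : ℕ) : ℂ) * ((j - (i : ℕ)).choose m : ℂ)
          = (j.choose m : ℂ) * ((j - m).choose (i : ℕ) : ℂ) := by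
        exact_mod_cast congrArg (Nat.cast : ℕ → ℂ) (choose_swap hle)
      rw [hpow]
      linear_combination ((Nat.factorial (i : ℕ) : ℂ)) * ((2 * (π:ℂ) * Complex.I) ^ m)⁻¹ *
        ((2 * (π:ℂ) * Complex.I) ^ (j - m - (i : ℕ)))⁻¹ *
        (iteratedDeriv m P x) * (iteratedDeriv (j - m - (i : ℕ)) (F l i) x) * hc
    · have hA : (j - m).choose (i : ℕ) = 0 := Nat.choose_eq_zero_of_lt (by omega)
      rcases Nat.lt_or_ge j (i : ℕ) with h' | h'
      · simp [Nat.choose_eq_zero_of_lt h', hA]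
      · have : j - (i : ℕ) < m := by omega
        simp [Nat.choose_eq_zero_of_lt this, hA]
  rw [Finset.sum_congr rfl (fun i _ => key i), Finset.sum_comm]
  have inner : ∀ m ∈ Finset.range (j + 1),
      (∑ i : Fin r,
        ((j.choose m : ℂ) * ((2 * π * Complex.I) ^ m)⁻¹ * iteratedDeriv m P x) *
        (((j - m).choose (i : ℕ) : ℂ) * (Nat.factorial (i : ℕ) : ℂ) *
          ((2 * π * Complex.I) ^ (j - m - (i : ℕ)))⁻¹ *
          iteratedDeriv (j - m - (i : ℕ)) (F l i) x))
      = ((j.choose m : ℂ) * ((2 * π * Complex.I) ^ m)⁻¹ * iteratedDeriv m P x) *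
        ((ρ : ℂ) * (if l = 0 then 1 else 0) * (if j - m = 0 then 1 else 0)) := by
    intro m hm
    rw [← Finset.mul_sum, hmom (j - m) (by omega) l]
  rw [Finset.sum_congr rfl inner]
  by_cases hl : l = 0
  · subst hl
    have hx0 : x = 0 := by simp [hxdef]
    rw [Finset.sum_eq_single_of_mem j (Finset.self_mem_range_succ j)
      (by
        intro m hm hne
        have : j - m ≠ 0 := by
          simp only [Finset.mem_range, Nat.lt_succ_iff] at hm
          omega
        simp [this])]
    rw [hx0, hP j hj]
    simp only [Nat.sub_self, Nat.choose_self, Nat.cast_one, if_pos rfl]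
    by_cases hj0 : j = 0
    · subst hj0; simp
    · simp [hj0]
  · simp [hl]
end
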